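/- (Properties of the rate function I_∞) One has I_∞ = max(0, Ĩ_∞) pointwise on ℝ^d × ℝ^d; both I_∞ and Ĩ_∞ are lower semicontinuous; I_∞ ≥ 0 everywhere; and I_∞ = 0 on Γ_∞. -/

import Mathlib

open MeasureTheory ENNReal Filter
open scoped Classical

noncomputable section

/-- ℝ^d with its Euclidean structure. -/
abbrev Rd (d : ℕ) := EuclideanSpace ℝ (Fin d)

/-- γ ∈ Π(μ,ν): γ has first marginal μ and second marginal ν. -/
def IsCoupling {E F : Type*} [MeasurableSpace E] [MeasurableSpace F]
    (γ : Measure (E × F)) (μ : Measure E) (ν : Measure F) : Prop :=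
  γ.map Prod.fst = μ ∧ γ.map Prod.snd = ν

/-- Relative entropy H(γ|ρ) = ∫ log(dγ/dρ) dγ if γ ≪ ρ (and the integral exists), +∞ otherwise. -/
def relEntropy {E : Type*} [MeasurableSpace E] (γ ρ : Measure E) : ℝ≥0∞ :=
  if γ ≪ ρ ∧ Integrable (llr γ ρ) γ then ENNReal.ofReal (∫ z, llr γ ρ z ∂γ) else ∞

/-- The entropic functional J_{p,ε}(γ) = (∫ c^p dγ + ε H(γ|μ⊗ν))^{1/p} on Π(μ,ν), +∞ outside. -/
def Jpe {d : ℕ} (c : Rd d × Rd d → ℝ) (μ ν : Measure (Rd d)) (p ε : ℝ)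
    (γ : Measure (Rd d × Rd d)) : ℝ≥0∞ :=
  if IsCoupling γ μ ν then
    (∫⁻ z, ENNReal.ofReal (c z ^ p) ∂γ + ENNReal.ofReal ε * relEntropy γ (μ.prod ν)) ^ (1 / p)
  else ∞

/-- The supremal functional J_∞(γ) = γ-ess sup c on Π(μ,ν), +∞ outside. -/
def Jinf {d : ℕ} (c : Rd d × Rd d → ℝ) (μ ν : Measure (Rd d))
    (γ : Measure (Rd d × Rd d)) : ℝ≥0∞ :=
  if IsCoupling γ μ ν then essSup (fun z => ENNReal.ofReal (c z)) γ else ∞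

/-- Weak-star convergence of a family of (probability) measures, as the real parameter p → ∞. -/
def WeakStarTendsto {E : Type*} [MeasurableSpace E] [TopologicalSpace E]
    (γ : ℝ → Measure E) (γ₀ : Measure E) : Prop :=
  ∀ f : BoundedContinuousFunction E ℝ,
    Tendsto (fun p => ∫ z, f z ∂(γ p)) atTop (nhds (∫ z, f z ∂γ₀))

/-- The support of a Borel measure: points all of whose neighborhoods have positive measure. -/
def msupport {E : Type*} [MeasurableSpace E] [TopologicalSpace E] (μ : Measure E) : Set E :=
  {x | ∀ U ∈ nhds x, μ U ≠ 0}

/-- Γ is ∞-cyclically monotone: for all finite families (x_i,y_i)_{i} ⊂ Γ,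
    max_i c(x_i,y_i) ≤ max_i c(x_i,y_{i+1}) with cyclic successor. -/
def InftyCM {d : ℕ} (c : Rd d × Rd d → ℝ) (Γ : Set (Rd d × Rd d)) : Prop :=
  ∀ (k : ℕ) (x y : Fin (k + 1) → Rd d), (∀ i, (x i, y i) ∈ Γ) →
    (Finset.univ.sup' Finset.univ_nonempty fun i => c (x i, y i)) ≤
      Finset.univ.sup' Finset.univ_nonempty fun i => c (x i, y (i + 1))

/-- The rate function I_∞(x,y): supremum over k ≥ 2 points (the first being (x,y), the others
    in Γ) and permutations σ of max_i c(x_i,y_i) − max_i c(x_i,y_{σ(i)}). -/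
def Irate {d : ℕ} (c : Rd d × Rd d → ℝ) (Γ : Set (Rd d × Rd d)) (z : Rd d × Rd d) : EReal :=
  ⨆ (k : ℕ) (f : Fin (k + 2) → Rd d × Rd d) (_ : f 0 = z) (_ : ∀ i, i ≠ 0 → f i ∈ Γ)
      (σ : Equiv.Perm (Fin (k + 2))),
    (((Finset.univ.sup' Finset.univ_nonempty fun i => c (f i)) -
        Finset.univ.sup' Finset.univ_nonempty fun i => c ((f i).1, (f (σ i)).2) : ℝ) : EReal)

/-- The rate function Ĩ_∞(x,y): supremum over k ≥ 2 points (the first being (x,y), the others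
    in Γ) of max_i c(x_i,y_i) − max_i c(x_i,y_{i+1}), with cyclic successor. -/
def ItildeRate {d : ℕ} (c : Rd d × Rd d → ℝ) (Γ : Set (Rd d × Rd d)) (z : Rd d × Rd d) :
    EReal :=
  ⨆ (k : ℕ) (f : Fin (k + 2) → Rd d × Rd d) (_ : f 0 = z) (_ : ∀ i, i ≠ 0 → f i ∈ Γ),
    (((Finset.univ.sup' Finset.univ_nonempty fun i => c (f i)) -
        Finset.univ.sup' Finset.univ_nonempty fun i => c ((f i).1, (f (i + 1)).2) : ℝ) : EReal)

/-!
For a family `f` with `f 0 = z` and a permutation `σ`, only the cycle of `σ` through a maximiser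
`i₀` of `i ↦ c (f i)` matters: restricted to that cycle, the first maximum is unchanged and the
second one can only drop. If the cycle avoids `0`, it lies in `Γ_∞` and `∞`-cyclical monotonicity
makes the gap nonpositive; otherwise, run from `0`, the cycle is a competitor for `Ĩ_∞(z)`.
Lower semicontinuity holds because, once the other points are fixed, every term is continuous in
`z`.
-/

open Equiv Finset Function

theorem Function.IsPeriodicPt.iterate_val_add_one {X : Type*} {g : X → X} {k : ℕ} {p : X}
    (hp : IsPeriodicPt g (k + 1) p) (j : Fin (k + 1)) :
    g^[(j + 1 : Fin (k + 1))] p = g (g^[j] p) := by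
  rw [Fin.val_add_one]
  split_ifs with h
  · rw [iterate_zero_apply, h, Fin.val_last, ← iterate_succ_apply' g k p, hp.eq]
  · rw [iterate_succ_apply']

section PermGap

variable {α β ι : Type*} [Fintype ι] [Nonempty ι]

def permGap (c : α × β → ℝ) (f : ι → α × β) (σ : Perm ι) : ℝ :=
  (univ.sup' univ_nonempty fun i => c (f i)) -
    univ.sup' univ_nonempty fun i => c ((f i).1, (f (σ i)).2)

theorem permGap_one (c : α × β → ℝ) (f : ι → α × β) : permGap c f 1 = 0 := by
  simp [permGap]

theorem continuous_permGap [TopologicalSpace α] [TopologicalSpace β] {c : α × β → ℝ}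
    (hc : Continuous c) (σ : Perm ι) : Continuous fun f : ι → α × β => permGap c f σ := by
  have hf (i : ι) : Continuous fun f : ι → α × β => f i := continuous_apply i
  refine .sub (.finset_sup'_apply _ fun i _ => hc.comp (hf i)) ?_
  exact .finset_sup'_apply _ fun i _ => hc.comp ((hf i).fst.prodMk (hf (σ i)).snd)

theorem permGap_le_permGap_orbit (c : α × β → ℝ) (f : ι → α × β) {σ : Perm ι} {p : ι}
    {k s : ℕ} (hp : IsPeriodicPt σ (k + 1) p) (hs : s < k + 1)
    (hmax : ∀ i, c (f i) ≤ c (f (σ^[s] p))) :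
    permGap c f σ ≤ permGap c (fun j : Fin (k + 1) => f (σ^[j] p)) (Equiv.addRight 1) := by
  refine sub_le_sub ?_ (Finset.sup'_le _ _ fun j _ => ?_)
  · refine Finset.sup'_le _ _ fun i _ => (hmax i).trans ?_
    exact Finset.le_sup' (fun j : Fin (k + 1) => c (f (σ^[j] p))) (mem_univ ⟨s, hs⟩)
  · simp only [coe_addRight, hp.iterate_val_add_one]
    exact Finset.le_sup' (fun i => c ((f i).1, (f (σ i)).2)) (mem_univ _)

end PermGap

theorem lowerSemicontinuous_iSup_head_eq {X δ : Type*} [TopologicalSpace X]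
    [CompleteLinearOrder δ] [TopologicalSpace δ] [OrderTopology δ] (Γ : Set X)
    (Φ : ∀ k : ℕ, (Fin (k + 2) → X) → δ) (hΦ : ∀ k, LowerSemicontinuous (Φ k)) :
    LowerSemicontinuous fun z =>
      ⨆ (k : ℕ) (f : Fin (k + 2) → X) (_ : f 0 = z) (_ : ∀ i, i ≠ 0 → f i ∈ Γ), Φ k f := by
  have h_update (z : X) : (⨆ (k : ℕ) (f : Fin (k + 2) → X) (_ : f 0 = z)
      (_ : ∀ i, i ≠ 0 → f i ∈ Γ), Φ k f) =
      ⨆ (k : ℕ) (g : Fin (k + 2) → X) (_ : ∀ i, i ≠ 0 → g i ∈ Γ), Φ k (update g 0 z) := by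
    refine le_antisymm (iSup_le fun k => iSup_le fun f => iSup_le fun hf0 => iSup_le fun hf => ?_)
      (iSup_le fun k => iSup_le fun g => iSup_le fun hg => ?_)
    · refine le_iSup_of_le k (le_iSup_of_le f (le_iSup_of_le hf (le_of_eq ?_)))
      rw [← hf0, update_eq_self]
    · refine le_iSup_of_le k (le_iSup_of_le (update g 0 z) (le_iSup_of_le (update_self ..)
        (le_iSup_of_le (fun i hi => ?_) le_rfl)))
      rw [update_of_ne hi]
      exact hg i hi
  simp only [h_update]
  exact lowerSemicontinuous_iSup fun k => lowerSemicontinuous_iSup fun g =>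
    lowerSemicontinuous_iSup fun _ => (hΦ k).comp (continuous_const.update 0 continuous_id)

theorem msupport_nonempty {E : Type*} [MeasurableSpace E] [TopologicalSpace E]
    [SecondCountableTopology E] {μ : Measure E} (hμ : μ ≠ 0) : (msupport μ).Nonempty := by
  obtain ⟨x, -, hx⟩ := exists_mem_forall_mem_nhdsWithin_pos_measure (μ := μ) (s := Set.univ)
    (by simpa using hμ)
  exact ⟨x, fun U hU => (hx U (by rwa [nhdsWithin_univ])).ne'⟩

section RateFunctions

variable {d : ℕ} {c : Rd d × Rd d → ℝ} {Γ : Set (Rd d × Rd d)}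

theorem Irate_eq_iSup_permGap (z : Rd d × Rd d) :
    Irate c Γ z = ⨆ (k : ℕ) (f : Fin (k + 2) → Rd d × Rd d) (_ : f 0 = z)
      (_ : ∀ i, i ≠ 0 → f i ∈ Γ) (σ : Perm (Fin (k + 2))), (permGap c f σ : EReal) :=
  rfl

theorem ItildeRate_le_Irate (z : Rd d × Rd d) : ItildeRate c Γ z ≤ Irate c Γ z :=
  iSup_mono fun _ => iSup_mono fun f => iSup_mono fun _ => iSup_mono fun _ =>
    le_iSup (fun σ => (permGap c f σ : EReal)) (Equiv.addRight 1)

theorem Irate_nonneg (hne : Γ.Nonempty) (z : Rd d × Rd d) : 0 ≤ Irate c Γ z := by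
  obtain ⟨w, hw⟩ := hne
  let f : Fin 2 → Rd d × Rd d := update (fun _ => w) 0 z
  have hf : ∀ i, i ≠ 0 → f i ∈ Γ := fun i hi => by simpa [f, update_of_ne hi] using hw
  rw [Irate_eq_iSup_permGap]
  refine le_iSup_of_le 0 (le_iSup_of_le f (le_iSup_of_le (update_self ..)
    (le_iSup_of_le hf (le_iSup_of_le 1 ?_))))
  rw [permGap_one, EReal.coe_zero]

theorem lowerSemicontinuous_Irate (hc : Continuous c) : LowerSemicontinuous (Irate c Γ) :=
  lowerSemicontinuous_iSup_head_eq Γ (fun k f => ⨆ σ : Perm (Fin (k + 2)), (permGap c f σ : EReal))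
    fun _ => lowerSemicontinuous_iSup fun σ =>
      (continuous_coe_real_ereal.comp (continuous_permGap hc σ)).lowerSemicontinuous

theorem lowerSemicontinuous_ItildeRate (hc : Continuous c) :
    LowerSemicontinuous (ItildeRate c Γ) :=
  lowerSemicontinuous_iSup_head_eq Γ (fun _ f => (permGap c f (Equiv.addRight 1) : EReal))
    fun _ => (continuous_coe_real_ereal.comp (continuous_permGap hc _)).lowerSemicontinuous

theorem permGap_addRight_le_max_ItildeRate {z : Rd d × Rd d} {k : ℕ}
    (g : Fin (k + 1) → Rd d × Rd d) (hg0 : g 0 = z) (hg : ∀ i, i ≠ 0 → g i ∈ Γ) :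
    (permGap c g (Equiv.addRight 1) : EReal) ≤ max 0 (ItildeRate c Γ z) := by
  cases k with
  | zero =>
    rw [show Equiv.addRight (1 : Fin 1) = 1 from Equiv.ext fun _ => Subsingleton.elim _ _,
      permGap_one, EReal.coe_zero]
    exact le_max_left _ _
  | succ k =>
    exact le_max_of_le_right (le_iSup_of_le k (le_iSup_of_le g (le_iSup_of_le hg0
      (le_iSup_of_le hg le_rfl))))

namespace InftyCM

variable (hΓ : InftyCM c Γ)
include hΓ

theorem permGap_addRight_nonpos {k : ℕ} (f : Fin (k + 1) → Rd d × Rd d)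
    (hf : ∀ i, f i ∈ Γ) : permGap c f (Equiv.addRight 1) ≤ 0 :=
  sub_nonpos.2 (hΓ k (fun i => (f i).1) (fun i => (f i).2) hf)

theorem permGap_nonpos_of_orbit_mem {ι : Type*} [Fintype ι] [Nonempty ι]
    (f : ι → Rd d × Rd d) (σ : Perm ι) {i₀ : ι} (hmax : ∀ i, c (f i) ≤ c (f i₀))
    (horb : ∀ n, f (σ^[n] i₀) ∈ Γ) : permGap c f σ ≤ 0 := by
  obtain ⟨k, hk⟩ : ∃ k, minimalPeriod σ i₀ = k + 1 :=
    Nat.exists_eq_add_one.2 (minimalPeriod_pos_of_mem_periodicPts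
      (σ.injective.mem_periodicPts i₀))
  have hp : IsPeriodicPt σ (k + 1) i₀ := hk ▸ isPeriodicPt_minimalPeriod σ i₀
  exact (permGap_le_permGap_orbit c f hp k.succ_pos hmax).trans
    (hΓ.permGap_addRight_nonpos _ fun j => horb j)

theorem permGap_le_max_ItildeRate {z : Rd d × Rd d} {k : ℕ} (f : Fin (k + 2) → Rd d × Rd d)
    (hf0 : f 0 = z) (hf : ∀ i, i ≠ 0 → f i ∈ Γ) (σ : Perm (Fin (k + 2))) :
    (permGap c f σ : EReal) ≤ max 0 (ItildeRate c Γ z) := by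
  obtain ⟨i₀, -, hmax⟩ := exists_max_image univ (fun i => c (f i)) univ_nonempty
  by_cases hcyc : σ.SameCycle 0 i₀
  · -- the cycle of `σ` through the maximiser starts at `0`, so it competes in `ItildeRate c Γ z`
    obtain ⟨n, hn⟩ := hcyc.exists_nat_pow_eq
    have hpos : 0 < minimalPeriod σ 0 :=
      minimalPeriod_pos_of_mem_periodicPts (σ.injective.mem_periodicPts 0)
    obtain ⟨m, hm⟩ := Nat.exists_eq_add_one.2 hpos
    have hp : IsPeriodicPt σ (m + 1) 0 := hm ▸ isPeriodicPt_minimalPeriod σ 0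
    have hs : σ^[n % (m + 1)] 0 = i₀ := by rw [← hm, iterate_mod_minimalPeriod_eq, ← hn]; rfl
    refine (EReal.coe_le_coe_iff.2 (permGap_le_permGap_orbit c f hp (Nat.mod_lt _ m.succ_pos)
      fun i => by rw [hs]; exact hmax i (mem_univ i))).trans
      (permGap_addRight_le_max_ItildeRate _ (by simpa using hf0) fun j hj => hf _ ?_)
    exact not_isPeriodicPt_of_pos_of_lt_minimalPeriod (Fin.val_ne_zero_iff.2 hj) (by omega)
  · refine le_max_of_le_left (EReal.coe_nonpos.2 (hΓ.permGap_nonpos_of_orbit_mem f σ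
      (fun i => hmax i (mem_univ i)) fun n => hf _ fun hn => hcyc ?_))
    have hcyc' : σ.SameCycle i₀ ((σ ^ n) i₀) := Perm.sameCycle_pow_right.2 (.refl σ i₀)
    rw [← Perm.iterate_eq_pow, hn] at hcyc'
    exact hcyc'.symm

theorem Irate_le_max_zero_ItildeRate (z : Rd d × Rd d) :
    Irate c Γ z ≤ max 0 (ItildeRate c Γ z) :=
  iSup_le fun _ => iSup_le fun f => iSup_le fun hf0 => iSup_le fun hf => iSup_le fun σ =>
    hΓ.permGap_le_max_ItildeRate f hf0 hf σ

theorem ItildeRate_nonpos_of_mem {z : Rd d × Rd d} (hz : z ∈ Γ) : ItildeRate c Γ z ≤ 0 :=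
  iSup_le fun _ => iSup_le fun f => iSup_le fun hf0 => iSup_le fun hf =>
    EReal.coe_nonpos.2 (hΓ.permGap_addRight_nonpos f fun i =>
      if hi : i = 0 then hi ▸ hf0 ▸ hz else hf i hi)

end InftyCM

end RateFunctions

theorem Irate_properties_general {d : ℕ} (c : Rd d × Rd d → ℝ) (hc : Continuous c)
    (γinf : Measure (Rd d × Rd d)) (hγinfP : IsProbabilityMeasure γinf)
    (hΓ : InftyCM c (msupport γinf)) :
    (∀ z, Irate c (msupport γinf) z = max 0 (ItildeRate c (msupport γinf) z)) ∧
    LowerSemicontinuous (Irate c (msupport γinf)) ∧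
    LowerSemicontinuous (ItildeRate c (msupport γinf)) ∧
    (∀ z, 0 ≤ Irate c (msupport γinf) z) ∧
    (∀ z ∈ msupport γinf, Irate c (msupport γinf) z = 0) := by
  have hnonneg : ∀ z, 0 ≤ Irate c (msupport γinf) z :=
    Irate_nonneg (msupport_nonempty hγinfP.ne_zero)
  have hmax (z) : Irate c (msupport γinf) z = max 0 (ItildeRate c (msupport γinf) z) :=
    (hΓ.Irate_le_max_zero_ItildeRate z).antisymm (max_le (hnonneg z) (ItildeRate_le_Irate z))
  refine ⟨hmax, lowerSemicontinuous_Irate hc, lowerSemicontinuous_ItildeRate hc, hnonneg,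
    fun z hz => ?_⟩
  rw [hmax, max_eq_left (hΓ.ItildeRate_nonpos_of_mem hz)]

/-- (Properties of the rate function I_∞) I_∞ = max(0, Ĩ_∞), both are lower semicontinuous,
    I_∞ ≥ 0 everywhere and I_∞ = 0 on Γ_∞. -/
theorem Irate_properties {d : ℕ} (c : Rd d × Rd d → ℝ) (hc : Continuous c)
    (hc1 : ∀ z, 1 ≤ c z)
    (μ ν : Measure (Rd d)) [IsProbabilityMeasure μ] [IsProbabilityMeasure ν]
    (hμ : IsCompact (msupport μ)) (hν : IsCompact (msupport ν))
    (γinf : Measure (Rd d × Rd d)) (hγinfP : IsProbabilityMeasure γinf)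
    (hγinfC : IsCoupling γinf μ ν) (hΓ : InftyCM c (msupport γinf)) :
    (∀ z, Irate c (msupport γinf) z = max 0 (ItildeRate c (msupport γinf) z)) ∧
    LowerSemicontinuous (Irate c (msupport γinf)) ∧
    LowerSemicontinuous (ItildeRate c (msupport γinf)) ∧
    (∀ z, 0 ≤ Irate c (msupport γinf) z) ∧
    (∀ z ∈ msupport γinf, Irate c (msupport γinf) z = 0) :=
  Irate_properties_general c hc γinf hγinfP hΓ
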